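/- arXiv:2412.20849 — 5 statements merged into one kernel-verified Lean document; each statement's English description precedes it below -/
import Mathlib

section
/- Let $k,d \in \mathbb{N}$ with $k < d$, and let $x_1,\ldots,x_k$ be distinct real numbers. For $i=1,\ldots,k$ let $A_i \in \mathbb{R}^{(d-i+1)\times(d-i+2)}$ be the bidiagonal matrix with entries $(A_i)_{r,r} = -x_i$ and $(A_i)_{r,r+1} = 1$, all other entries zero. Then the product $B_k := A_k A_{k-1} \cdots A_1 \in \mathbb{R}^{(d-k+1)\times(d+1)}$ has entries $(B_k)_{ij} = (-1)^{k+i-j} e_{k+i-j}(x_1,\ldots,x_k)$ if $1 \leq i \leq j \leq i+k$, and $(B_k)_{ij} = 0$ otherwise, where $e_m$ denotes the $m$-th elementary symmetric polynomial. -/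
/-- `m`-th elementary symmetric polynomial of `x 1, ..., x k` (1-based indices). -/
noncomputable def esymm (k m : ℕ) (x : ℕ → ℝ) : ℝ :=
  ∑ t ∈ (Finset.Icc 1 k).powersetCard m, ∏ i ∈ t, x i

/-- The bidiagonal matrix `A_i ∈ ℝ^{(d-i+1)×(d-i+2)}`, encoded as a 1-based
ℕ-indexed array vanishing outside its rectangle: `(A_i)_{r,r} = -x_i`,
`(A_i)_{r,r+1} = 1`. -/
noncomputable def Amat (d : ℕ) (x : ℕ → ℝ) (i : ℕ) : ℕ → ℕ → ℝ :=
  fun r c =>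
    if 1 ≤ r ∧ r ≤ d - i + 1 ∧ 1 ≤ c ∧ c ≤ d - i + 2 then
      (if c = r then -x i else if c = r + 1 then 1 else 0)
    else 0

/-- Matrix product for the ℕ-indexed encoding (all relevant inner indices lie
in `[1, d+1]`, and entries vanish outside the rectangles). -/
noncomputable def matMul (d : ℕ) (X Y : ℕ → ℕ → ℝ) : ℕ → ℕ → ℝ :=
  fun r c => ∑ l ∈ Finset.Icc 1 (d + 1), X r l * Y l c

/-- `B_k = A_k A_{k-1} ⋯ A_1`. -/
noncomputable def Bmat (d : ℕ) (x : ℕ → ℝ) : ℕ → ℕ → ℕ → ℝ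
  | 0 => fun _ _ => 0
  | 1 => Amat d x 1
  | (n + 2) => matMul d (Amat d x (n + 2)) (Bmat d x (n + 1))

lemma esymm_zero' (k : ℕ) (x : ℕ → ℝ) : esymm k 0 x = 1 := by
  simp [esymm]

lemma esymm_big (k m : ℕ) (x : ℕ → ℝ) (h : k < m) : esymm k m x = 0 := by
  unfold esymm
  rw [Finset.powersetCard_eq_empty.2 (by simp [Nat.card_Icc]; omega), Finset.sum_empty]

lemma esymm_succ (k m : ℕ) (x : ℕ → ℝ) :
    esymm (k + 1) (m + 1) x = esymm k (m + 1) x + x (k + 1) * esymm k m x := by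
  have hkk : (k + 1) ∉ Finset.Icc 1 k := by simp
  have hins : Finset.Icc 1 (k + 1) = insert (k + 1) (Finset.Icc 1 k) := by
    ext a; simp [Finset.mem_Icc]; omega
  unfold esymm
  rw [hins, Finset.powersetCard_succ_insert hkk, Finset.sum_union, Finset.sum_image]
  · congr 1
    rw [Finset.mul_sum]
    apply Finset.sum_congr rfl
    intro t ht
    rw [Finset.prod_insert]
    intro hmem
    exact hkk ((Finset.mem_powersetCard.1 ht).1 hmem)
  · intro t ht u hu h
    have ht' := (Finset.mem_powersetCard.1 ht).1
    have hu' := (Finset.mem_powersetCard.1 hu).1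
    ext a
    constructor <;> intro ha
    · have : a ∈ insert (k+1) u := h ▸ Finset.mem_insert_of_mem ha
      rcases Finset.mem_insert.1 this with rfl | h'
      · exact absurd (ht' ha) hkk
      · exact h'
    · have : a ∈ insert (k+1) t := h ▸ Finset.mem_insert_of_mem ha
      rcases Finset.mem_insert.1 this with rfl | h'
      · exact absurd (hu' ha) hkk
      · exact h'
  · rw [Finset.disjoint_right]
    intro t ht ht'
    obtain ⟨u, hu, rfl⟩ := Finset.mem_image.1 ht
    exact hkk ((Finset.mem_powersetCard.1 ht').1 (Finset.mem_insert_self _ _))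

lemma matMul_Amat (d kk : ℕ) (x : ℕ → ℝ) (Y : ℕ → ℕ → ℝ) (i j : ℕ)
    (hi1 : 1 ≤ i) (hi2 : i ≤ d - kk + 1) (hkk : 1 ≤ kk) (hkd : kk ≤ d) :
    matMul d (Amat d x kk) Y i j = -x kk * Y i j + Y (i + 1) j := by
  unfold matMul
  have hsub : ({i, i + 1} : Finset ℕ) ⊆ Finset.Icc 1 (d + 1) := by
    intro a ha
    simp only [Finset.mem_insert, Finset.mem_singleton] at ha
    simp only [Finset.mem_Icc]
    omega
  rw [← Finset.sum_subset hsub]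
  · rw [Finset.sum_pair (by omega)]
    have h1 : Amat d x kk i i = -x kk := by
      unfold Amat
      rw [if_pos (⟨hi1, by omega, hi1, by omega⟩ :
        1 ≤ i ∧ i ≤ d - kk + 1 ∧ 1 ≤ i ∧ i ≤ d - kk + 2), if_pos rfl]
    have h2 : Amat d x kk i (i + 1) = 1 := by
      unfold Amat
      rw [if_pos (⟨hi1, by omega, by omega, by omega⟩ :
        1 ≤ i ∧ i ≤ d - kk + 1 ∧ 1 ≤ i + 1 ∧ i + 1 ≤ d - kk + 2),
        if_neg (by omega), if_pos rfl]
    rw [h1, h2, one_mul]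
  · intro l _ hl
    simp only [Finset.mem_insert, Finset.mem_singleton, not_or] at hl
    have : Amat d x kk i l = 0 := by
      simp only [Amat]
      split
      · rw [if_neg (by omega), if_neg (by omega)]
      · rfl
    rw [this, zero_mul]

lemma Bmat_key (d : ℕ) (x : ℕ → ℝ) (n : ℕ) :
    ∀ i j : ℕ, n + 1 ≤ d → 1 ≤ i → i ≤ d - (n + 1) + 1 → 1 ≤ j → j ≤ d + 1 →
      Bmat d x (n + 1) i j =
        if i ≤ j ∧ j ≤ i + (n + 1) then
          (-1 : ℝ) ^ (n + 1 + i - j) * esymm (n + 1) (n + 1 + i - j) x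
        else 0 := by
  induction n with
  | zero =>
    intro i j hd hi1 hi2 hj1 hj2
    show Amat d x 1 i j = _
    unfold Amat
    rw [if_pos (⟨hi1, by omega, hj1, by omega⟩ :
      1 ≤ i ∧ i ≤ d - 1 + 1 ∧ 1 ≤ j ∧ j ≤ d - 1 + 2)]
    have he1 : esymm 1 1 x = x 1 := by
      have := esymm_succ 0 0 x
      rw [esymm_big 0 1 x (by omega), esymm_zero'] at this
      rw [this]; ring
    by_cases h1 : j = i
    · subst h1
      rw [if_pos rfl, if_pos ⟨le_refl _, by omega⟩]
      have : 0 + 1 + j - j = 1 := by omega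
      rw [this, he1]; ring
    · rw [if_neg h1]
      by_cases h2 : j = i + 1
      · subst h2
        rw [if_pos rfl, if_pos ⟨by omega, by omega⟩]
        have : 0 + 1 + i - (i + 1) = 0 := by omega
        rw [this, esymm_zero']; ring
      · rw [if_neg h2, if_neg (by omega)]
  | succ n ih =>
    intro i j hd hi1 hi2 hj1 hj2
    show matMul d (Amat d x (n + 2)) (Bmat d x (n + 1)) i j = _
    rw [matMul_Amat d (n + 2) x _ i j hi1 (by omega) (by omega) (by omega)]
    rw [ih i j (by omega) hi1 (by omega) hj1 hj2,
        ih (i + 1) j (by omega) (by omega) (by omega) hj1 hj2]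
    by_cases h1 : i ≤ j ∧ j ≤ i + (n + 2)
    · rw [if_pos h1]
      by_cases h2 : j = i
      · subst h2
        rw [if_pos ⟨le_refl _, by omega⟩, if_neg (by omega)]
        have e1 : n + 1 + j - j = n + 1 := by omega
        have e2 : n + 1 + 1 + j - j = n + 2 := by omega
        rw [e1, e2, esymm_succ (n + 1) (n + 1) x, esymm_big (n + 1) (n + 2) x (by omega)]
        ring_nf
      · by_cases h3 : j = i + (n + 2)
        · subst h3
          rw [if_neg (by omega), if_pos ⟨by omega, by omega⟩]
          have e1 : n + 1 + (i + 1) - (i + (n + 2)) = 0 := by omega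
          have e2 : n + 1 + 1 + i - (i + (n + 2)) = 0 := by omega
          rw [e1, e2, esymm_zero', esymm_zero']
          ring
        · -- middle case : i + 1 ≤ j ≤ i + n + 1
          rw [if_pos ⟨by omega, by omega⟩, if_pos ⟨by omega, by omega⟩]
          have hp : ∃ p, n + 1 + i - j = p ∧ n + 1 + (i + 1) - j = p + 1 ∧
              n + 1 + 1 + i - j = p + 1 := ⟨n + 1 + i - j, rfl, by omega, by omega⟩
          obtain ⟨p, hp1, hp2, hp3⟩ := hp
          rw [hp1, hp2, hp3, esymm_succ (n + 1) p x, pow_succ]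
          ring
    · rw [if_neg h1]
      rw [if_neg (by omega), if_neg (by omega)]
      ring

theorem stmt_0 (k d : ℕ) (hk : 1 ≤ k) (hkd : k < d) (x : ℕ → ℝ)
    (hdist : Set.InjOn x (Set.Icc 1 k))
    (i j : ℕ) (hi1 : 1 ≤ i) (hi2 : i ≤ d - k + 1) (hj1 : 1 ≤ j) (hj2 : j ≤ d + 1) :
    Bmat d x k i j =
      if i ≤ j ∧ j ≤ i + k then (-1 : ℝ) ^ (k + i - j) * esymm k (k + i - j) x
      else 0 := by
  obtain ⟨n, rfl⟩ : ∃ n, k = n + 1 := ⟨k - 1, by omega⟩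
  exact Bmat_key d x n i j (by omega) hi1 hi2 hj1 hj2
end

section
/- Let $\gamma = (\gamma_0,\ldots,\gamma_{2d})$ be a real sequence with Riesz functional $L$, let $d_2 \le d$, and suppose the moment matrix $M_{d_2-1}$ is invertible. Define $(\varphi_0,\ldots,\varphi_{d_2-1})^T = M_{d_2-1}^{-1} (\gamma_{d_2},\ldots,\gamma_{2d_2-1})^T$ and $p(x) = x^{d_2} - \sum_{i=0}^{d_2-1} \varphi_i x^i$ with companion matrix $C_p$. Then the localizing matrix satisfies $\mathcal{H}_x(d_2-1) = M_{d_2-1} C_p$, where $\mathcal{H}_x(d_2-1)$ has entries $\gamma_{i+j-1}$ for $1 \le i,j \le d_2$. -/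
theorem stmt_9 (d d2 : ℕ) (hd2 : 1 ≤ d2) (hd2d : d2 ≤ d) (γ : ℕ → ℝ)
    (M H Cp : Matrix (Fin d2) (Fin d2) ℝ)
    (hM : ∀ i j : Fin d2, M i j = γ ((i : ℕ) + (j : ℕ)))
    (hH : ∀ i j : Fin d2, H i j = γ ((i : ℕ) + (j : ℕ) + 1))
    (hMinv : IsUnit M.det)
    (φ : Fin d2 → ℝ) (hφ : M.mulVec φ = fun i : Fin d2 => γ (d2 + (i : ℕ)))
    (hCp : ∀ i j : Fin d2, Cp i j =
      if (j : ℕ) = d2 - 1 then φ i else if (i : ℕ) = (j : ℕ) + 1 then 1 else 0) :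
    H = M * Cp := by
  ext i j
  rw [hH, Matrix.mul_apply]
  by_cases hj : (j : ℕ) = d2 - 1
  · have : ∑ k, M i k * Cp k j = ∑ k, M i k * φ k := by
      apply Finset.sum_congr rfl
      intro k _
      rw [hCp, if_pos hj]
    rw [this]
    have := congrFun hφ i
    simp only [Matrix.mulVec, dotProduct] at this
    rw [this]
    congr 1
    omega
  · have hjlt : (j : ℕ) + 1 < d2 := by omega
    have : ∑ k, M i k * Cp k j = M i ⟨(j : ℕ) + 1, hjlt⟩ := by
      rw [Finset.sum_eq_single (⟨(j : ℕ) + 1, hjlt⟩ : Fin d2)]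
      · rw [hCp, if_neg hj, if_pos rfl, mul_one]
      · intro k _ hk
        rw [hCp, if_neg hj, if_neg, mul_zero]
        intro h
        exact hk (Fin.ext h)
      · intro h; exact absurd (Finset.mem_univ _) h
    rw [this, hM]
    congr 1
end

section
/- Let $d_1,d_2 \in \mathbb{N}$, $D = d_1 + 2d_2 - 1$, and let $\gamma = (\gamma_0,\ldots,\gamma_D) \in \mathbb{R}^{D+1}$ be represented by $\mu = \sum_{i=1}^{d_1+d_2} \rho_i \delta_{y_i}$ with $\rho_i > 0$ and distinct $y_i \in \mathbb{R}$, where $y_i = x_i$ for $1 \le i \le d_1$ are prescribed. Let $f(x) = \prod_{i=1}^{d_1}(x - x_i)$ and let $L$ be the Riesz functional of $\mu$ on all polynomials. Then the $d_2 \times d_2$ localizing matrix $\mathcal{H}_f(d_2-1)$ with entries $L(f(x) x^{i+j-2})$, $1 \le i,j \le d_2$, is invertible. -/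
open Polynomial

theorem stmt_11 (d1 d2 : ℕ) (hd1 : 1 ≤ d1) (hd2 : 1 ≤ d2)
    (y ρ : ℕ → ℝ) (hdist : Set.InjOn y (Set.Iio (d1 + d2)))
    (hρ : ∀ j < d1 + d2, 0 < ρ j)
    (f : Polynomial ℝ) (hf : f = ∏ i ∈ Finset.range d1, (X - C (y i)))
    (H : Matrix (Fin d2) (Fin d2) ℝ)
    (hH : ∀ i j : Fin d2, H i j =
      ∑ l ∈ Finset.range (d1 + d2),
        ρ l * (f * X ^ ((i : ℕ) + (j : ℕ))).eval (y l)) :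
    IsUnit H.det := by
  set z : Fin d2 → ℝ := fun l => y (d1 + l) with hzdef
  set c : Fin d2 → ℝ := fun l => ρ (d1 + l) * f.eval (z l) with hcdef
  have hzmem : ∀ l : Fin d2, (d1 + (l : ℕ)) < d1 + d2 := fun l =>
    Nat.add_lt_add_left l.2 d1
  have hzinj : Function.Injective z := by
    intro a b hab
    have h := hdist (Set.mem_Iio.mpr (hzmem a)) (Set.mem_Iio.mpr (hzmem b)) hab
    exact Fin.ext (by omega)
  have hcne : ∀ l : Fin d2, c l ≠ 0 := by
    intro l
    have h1 : 0 < ρ (d1 + l) := hρ _ (hzmem l)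
    have h2 : f.eval (z l) ≠ 0 := by
      rw [hf]
      simp only [eval_prod, eval_sub, eval_X, eval_C]
      refine Finset.prod_ne_zero_iff.mpr (fun i hi => sub_ne_zero.mpr ?_)
      intro h
      have hi' : i < d1 := Finset.mem_range.mp hi
      have := hdist (Set.mem_Iio.mpr (hzmem l)) (Set.mem_Iio.mpr (by omega)) h
      omega
    exact mul_ne_zero h1.ne' h2
  have hzero : ∀ l < d1, f.eval (y l) = 0 := by
    intro l hl
    rw [hf]
    simp only [eval_prod, eval_sub, eval_X, eval_C]
    exact Finset.prod_eq_zero (Finset.mem_range.mpr hl) (by ring)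
  have hH' : H = (Matrix.vandermonde z).transpose * Matrix.diagonal c * Matrix.vandermonde z := by
    ext i j
    rw [hH]
    have hsplit : ∑ l ∈ Finset.range (d1 + d2),
        ρ l * (f * X ^ ((i : ℕ) + (j : ℕ))).eval (y l)
        = ∑ l ∈ Finset.range d2,
            ρ (d1 + l) * (f * X ^ ((i : ℕ) + (j : ℕ))).eval (y (d1 + l)) := by
      rw [Finset.sum_range_add]
      have h0 : ∑ l ∈ Finset.range d1,
          ρ l * (f * X ^ ((i : ℕ) + (j : ℕ))).eval (y l) = 0 := by
        refine Finset.sum_eq_zero (fun l hl => ?_)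
        rw [eval_mul, hzero l (Finset.mem_range.mp hl)]
        ring
      rw [h0, zero_add]
    rw [hsplit, Matrix.mul_apply]
    refine ((Fin.sum_univ_eq_sum_range
      (fun l => ρ (d1 + l) * (f * X ^ ((i : ℕ) + (j : ℕ))).eval (y (d1 + l)))
      d2).symm).trans ?_
    refine Finset.sum_congr rfl (fun l _ => ?_)
    simp only [Matrix.mul_apply, Matrix.transpose_apply, Matrix.diagonal_apply,
      Matrix.vandermonde, Matrix.of_apply, mul_ite, mul_zero, ite_mul, zero_mul,
      Finset.sum_ite_eq, Finset.sum_ite_eq', Finset.mem_univ, if_true]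
    rw [eval_mul, eval_pow, eval_X, hcdef]
    simp only [hzdef]
    rw [pow_add]
    ring
  rw [hH', Matrix.det_mul, Matrix.det_mul, Matrix.det_transpose, Matrix.det_diagonal]
  have hv : (Matrix.vandermonde z).det ≠ 0 :=
    (Matrix.det_vandermonde_ne_zero_iff).mpr hzinj
  have hc : ∏ l, c l ≠ 0 := Finset.prod_ne_zero_iff.mpr (fun l _ => hcne l)
  exact (mul_ne_zero (mul_ne_zero hv hc) hv).isUnit
end

section
/- Let $d_2 \ge 1$, let $\gamma = (\gamma_0,\ldots,\gamma_{2d_2})$ have positive definite moment matrix $M_{d_2-1}$ but singular $M_{d_2}$, and define $p(x) = x^{d_2} - \sum_{i=0}^{d_2-1}\varphi_i x^i$ where $(\varphi_0,\ldots,\varphi_{d_2-1})^T = M_{d_2-1}^{-1}(\gamma_{d_2},\ldots,\gamma_{2d_2-1})^T$. If for a real number $x_1$ the matrix $\mathcal{H}_{x - x_1}(d_2-1)$ (with entries $\gamma_{i+j-1} - x_1\gamma_{i+j-2}$) is singular, then $x_1$ is a root of $p$. -/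
theorem stmt_15 (d2 : ℕ) (hd2 : 1 ≤ d2) (γ : ℕ → ℝ)
    (M : Matrix (Fin d2) (Fin d2) ℝ)
    (hM : ∀ i j : Fin d2, M i j = γ ((i : ℕ) + (j : ℕ)))
    (hpd : M.PosDef)
    (Mbig : Matrix (Fin (d2 + 1)) (Fin (d2 + 1)) ℝ)
    (hMbig : ∀ i j : Fin (d2 + 1), Mbig i j = γ ((i : ℕ) + (j : ℕ)))
    (hsing : ¬ IsUnit Mbig.det)
    (φ : Fin d2 → ℝ) (hφ : M.mulVec φ = fun i : Fin d2 => γ (d2 + (i : ℕ)))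
    (x1 : ℝ)
    (H : Matrix (Fin d2) (Fin d2) ℝ)
    (hH : ∀ i j : Fin d2, H i j =
      γ ((i : ℕ) + (j : ℕ) + 1) - x1 * γ ((i : ℕ) + (j : ℕ)))
    (hHsing : ¬ IsUnit H.det) :
    x1 ^ d2 - ∑ i : Fin d2, φ i * x1 ^ (i : ℕ) = 0 := by
  classical
  -- companion matrix
  set C : Matrix (Fin d2) (Fin d2) ℝ := fun i j =>
    if (j : ℕ) + 1 = d2 then φ i else if (i : ℕ) = (j : ℕ) + 1 then 1 else 0 with hC
  set A : Matrix (Fin d2) (Fin d2) ℝ := C - x1 • 1 with hA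
  have hfact : H = M * A := by
    ext i j
    have : (M * A) i j = (∑ k, M i k * C k j) - x1 * M i j := by
      simp only [hA, Matrix.mul_apply, Matrix.sub_apply, Matrix.smul_apply,
        Matrix.one_apply, mul_sub, Finset.sum_sub_distrib]
      congr 1
      rw [Finset.sum_eq_single j]
      · simp [mul_comm]
      · intro k _ hk; simp [hk]
      · simp
    rw [this, hH, hM]
    congr 1
    by_cases hj : (j : ℕ) + 1 = d2
    · have : ∀ k, C k j = φ k := fun k => by simp [hC, hj]
      simp only [this]
      have := congrFun hφ i
      simp only [Matrix.mulVec, dotProduct] at this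
      have h3 : (∑ x : Fin d2, M i x * φ x) = γ (d2 + (i : ℕ)) := this
      rw [h3]
      congr 1
      omega
    · have hjlt : (j : ℕ) + 1 < d2 := lt_of_le_of_ne (j.isLt) hj
      have : (∑ k, M i k * C k j) = M i ⟨(j : ℕ) + 1, hjlt⟩ := by
        rw [Finset.sum_eq_single (⟨(j : ℕ) + 1, hjlt⟩ : Fin d2)]
        · simp [hC, hj]
        · intro k _ hk
          have : ¬ ((k : ℕ) = (j : ℕ) + 1) := by
            intro h; exact hk (Fin.ext h)
          simp [hC, hj, this]
        · simp
      rw [this, hM]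
      simp [Nat.add_assoc]
  have hMdet : M.det ≠ 0 := ne_of_gt hpd.det_pos
  have hHdet : H.det = 0 := by
    by_contra h
    exact hHsing (isUnit_iff_ne_zero.mpr h)
  have hAdet : A.det = 0 := by
    have := hfact ▸ hHdet
    rw [Matrix.det_mul] at this
    rcases mul_eq_zero.mp this with h | h
    · exact absurd h hMdet
    · exact h
  have hAT : A.transpose.det = 0 := by rw [Matrix.det_transpose]; exact hAdet
  obtain ⟨v, hv0, hv⟩ := (Matrix.exists_mulVec_eq_zero_iff).mpr hAT
  have hrow : ∀ j : Fin d2, (∑ k, C k j * v k) = x1 * v j := by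
    intro j
    have := congrFun hv j
    simp only [Matrix.mulVec, dotProduct, Matrix.transpose_apply, hA,
      Matrix.sub_apply, Matrix.smul_apply, Matrix.one_apply, sub_mul,
      smul_eq_mul, Finset.sum_sub_distrib, Pi.zero_apply] at this
    have h2 : (∑ k, (x1 * if k = j then (1:ℝ) else 0) * v k) = x1 * v j := by
      rw [Finset.sum_eq_single j] <;> simp; intro k hk; simp [hk]
    rw [h2] at this
    linarith [this]
  -- step recurrence
  have hstep : ∀ (m : ℕ) (hm : m + 1 < d2),
      v ⟨m + 1, hm⟩ = x1 * v ⟨m, by omega⟩ := by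
    intro m hm
    have := hrow ⟨m, by omega⟩
    rw [Finset.sum_eq_single (⟨m + 1, hm⟩ : Fin d2)] at this
    · simpa [hC, Nat.ne_of_lt hm] using this
    · intro k _ hk
      have hne : ¬ ((k : ℕ) = m + 1) := fun h => hk (Fin.ext h)
      simp [hC, Nat.ne_of_lt hm, hne]
    · simp
  have hpow : ∀ (m : ℕ) (hm : m < d2),
      v ⟨m, hm⟩ = x1 ^ m * v ⟨0, by omega⟩ := by
    intro m
    induction m with
    | zero => intro hm; simp
    | succ k ih =>
      intro hm
      rw [hstep k hm, ih (by omega)]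
      ring
  have hv0ne : v ⟨0, by omega⟩ ≠ 0 := by
    intro h
    apply hv0
    funext k
    have := hpow k k.isLt
    rw [h, mul_zero] at this
    simpa using this
  -- last row
  have hlastlt : d2 - 1 < d2 := by omega
  have hlast : (∑ k, φ k * v k) = x1 * v ⟨d2 - 1, hlastlt⟩ := by
    have := hrow ⟨d2 - 1, hlastlt⟩
    have hcond : (d2 - 1 : ℕ) + 1 = d2 := by omega
    simpa [hC, hcond] using this
  have hkey : (∑ k : Fin d2, φ k * x1 ^ (k : ℕ)) * v ⟨0, by omega⟩
      = x1 ^ d2 * v ⟨0, by omega⟩ := by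
    have h1 : (∑ k : Fin d2, φ k * v k)
        = (∑ k : Fin d2, φ k * x1 ^ (k : ℕ)) * v ⟨0, by omega⟩ := by
      rw [Finset.sum_mul]
      refine Finset.sum_congr rfl fun k _ => ?_
      have := hpow k k.isLt
      simp only [Fin.eta] at this
      rw [this]; ring
    have h2 : x1 * v ⟨d2 - 1, hlastlt⟩ = x1 ^ d2 * v ⟨0, by omega⟩ := by
      rw [hpow (d2 - 1) hlastlt]
      have : x1 * x1 ^ (d2 - 1) = x1 ^ d2 := by
        rw [← pow_succ']
        congr 1
        omega
      rw [← mul_assoc, this]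
    rw [← h1, hlast, h2]
  have : (x1 ^ d2 - ∑ i : Fin d2, φ i * x1 ^ (i : ℕ)) * v ⟨0, by omega⟩ = 0 := by
    rw [sub_mul, hkey]
    ring
  rcases mul_eq_zero.mp this with h | h
  · exact h
  · exact absurd h hv0ne
end

section
/- Let $y \in \mathbb{R}$, let $\gamma$ be a real sequence of sufficient length with Riesz functional $L$, and let $f \in \mathbb{R}[x]$. Suppose $\mathcal{H}_f(d_2-1)$ is invertible, and define $g(x) = x^{d_2} - \sum_{i=0}^{d_2-1}\lambda_i x^i$ where $(\lambda_0,\ldots,\lambda_{d_2-1})^T = (\mathcal{H}_f(d_2-1))^{-1} (L(f x^{d_2}),\ldots,L(f x^{2d_2-1}))^T$. Then $\mathcal{H}_{(x-y)f(x)}(d_2-1) = \mathcal{H}_{f(x)}(d_2-1)\,(C_g - y I)$, where $C_g$ is the companion matrix of $g$. Consequently, $\det \mathcal{H}_{(x-y)f(x)}(d_2-1) = 0$ if and only if $g(y) = 0$. -/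
open Polynomial

/-!
Multiplying `f` by `X` shifts the Hankel matrix `H_f` by one column, and its new last column
`(L(f x ^ (d + i)))_i` is `H_f λ` by the choice of `λ`; hence `H_{xf} = H_f C_g` and
`H_{(x-y)f} = H_f (C_g - y I)`. As `H_f` is invertible, this determinant vanishes iff
`C_g - y I` has a nonzero left kernel vector `v`. The first `d - 1` columns force
`v = v₀ (1, y, …, y ^ (d-1))`, and the last column then reads `v₀ g(y) = 0`.
-/

/-- The Riesz functional of a sequence `γ`: it sends `x^m ↦ γ m`. -/
noncomputable def riesz (γ : ℕ → ℝ) (p : Polynomial ℝ) : ℝ :=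
  ∑ m ∈ p.support, p.coeff m * γ m

/-- The localizing moment matrix `H_h(d2-1)` of `γ`, of size `d2 × d2`, with
entries `L(h(x) x^{i+j})` (0-based indices). -/
noncomputable def locMat (γ : ℕ → ℝ) (d2 : ℕ) (h : Polynomial ℝ) :
    Matrix (Fin d2) (Fin d2) ℝ :=
  fun i j => riesz γ (h * X ^ ((i : ℕ) + (j : ℕ)))

lemma riesz_eq_lsum (γ : ℕ → ℝ) (p : ℝ[X]) :
    riesz γ p = lsum (fun n => (LinearMap.id : ℝ →ₗ[ℝ] ℝ).smulRight (γ n)) p := rfl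

lemma locMat_X_sub_C_mul (γ : ℕ → ℝ) (d : ℕ) (y : ℝ) (f : ℝ[X]) :
    locMat γ d ((X - C y) * f) = locMat γ d (X * f) - y • locMat γ d f := by
  ext i j
  simp only [locMat, Matrix.sub_apply, Matrix.smul_apply, riesz_eq_lsum, ← map_smul, ← map_sub]
  congr 1
  rw [smul_eq_C_mul]
  ring

open scoped Matrix

section Companion

variable {R : Type*} [CommRing R]

-- The companion matrix of `X ^ d - ∑ i, c i * X ^ i`: ones on the subdiagonal, `c` in the last
-- column.
def companion {d : ℕ} (c : Fin d → R) : Matrix (Fin d) (Fin d) R :=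
  Matrix.of fun i j => if (j : ℕ) = d - 1 then c i else if (i : ℕ) = j + 1 then 1 else 0

variable {n : ℕ} (c : Fin (n + 1) → R)

@[simp]
lemma companion_apply_last (i : Fin (n + 1)) : companion c i (Fin.last n) = c i := by
  simp [companion]

@[simp]
lemma companion_apply_castSucc (i : Fin (n + 1)) (j : Fin n) :
    companion c i j.castSucc = if i = j.succ then 1 else 0 := by
  simp [companion, Fin.ext_iff, j.isLt.ne]

lemma mul_companion_last {m : Type*} [Fintype m] (A : Matrix m (Fin (n + 1)) R) (i : m) :
    (A * companion c) i (Fin.last n) = (A *ᵥ c) i := by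
  simp [Matrix.mul_apply, Matrix.mulVec, dotProduct]

lemma mul_companion_castSucc {m : Type*} [Fintype m] (A : Matrix m (Fin (n + 1)) R) (i : m)
    (j : Fin n) : (A * companion c) i j.castSucc = A i j.succ := by
  simp [Matrix.mul_apply]

lemma vecMul_companion_last (v : Fin (n + 1) → R) :
    (v ᵥ* companion c) (Fin.last n) = v ⬝ᵥ c := by
  simp [Matrix.vecMul, dotProduct]

lemma vecMul_companion_castSucc (v : Fin (n + 1) → R) (j : Fin n) :
    (v ᵥ* companion c) j.castSucc = v j.succ := by
  simp [Matrix.vecMul, dotProduct]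

lemma vecMul_companion_sub_smul_eq_zero_iff (y : R) (v : Fin (n + 1) → R) :
    v ᵥ* (companion c - y • 1) = 0 ↔
      (∀ j : Fin n, v j.succ = y * v j.castSucc) ∧ v ⬝ᵥ c = y * v (Fin.last n) := by
  simp only [Matrix.vecMul_sub, Matrix.vecMul_smul, Matrix.vecMul_one, funext_iff,
    Fin.forall_fin_succ', Pi.smul_apply, smul_eq_mul, vecMul_companion_castSucc,
    vecMul_companion_last, sub_eq_zero]

lemma det_companion_sub_smul_eq_zero_iff [IsDomain R] (y : R) :
    (companion c - y • 1).det = 0 ↔ y ^ (n + 1) - ∑ i, c i * y ^ (i : ℕ) = 0 := by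
  simp only [← Matrix.exists_vecMul_eq_zero_iff, vecMul_companion_sub_smul_eq_zero_iff]
  constructor
  · rintro ⟨v, hv0, hshift, hlast⟩
    have hpow : ∀ k : Fin (n + 1), v k = y ^ (k : ℕ) * v 0 := by
      refine Fin.induction (by simp) (fun j ih => ?_)
      rw [hshift, ih, Fin.val_succ, Fin.val_castSucc, pow_succ]
      ring
    have h0 : v 0 ≠ 0 := fun h => hv0 (funext fun k => by rw [hpow, h, mul_zero, Pi.zero_apply])
    have hsum : v ⬝ᵥ c = v 0 * ∑ i, c i * y ^ (i : ℕ) := by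
      rw [dotProduct, Finset.mul_sum]
      exact Finset.sum_congr rfl fun k _ => by rw [hpow k]; ring
    rw [hsum, hpow (Fin.last n), Fin.val_last] at hlast
    refine (mul_eq_zero.mp ?_).resolve_left h0
    rw [mul_sub, hlast]
    ring
  · intro hg
    refine ⟨fun k => y ^ (k : ℕ), fun h => by simpa using congrFun h 0, fun j => ?_, ?_⟩
    · simp [pow_succ, mul_comm]
    · simp only [dotProduct, Fin.val_last]
      rw [sub_eq_zero] at hg
      rw [← pow_succ', hg]
      simp [mul_comm]

end Companion

lemma locMat_X_mul_eq_mul_companion (γ : ℕ → ℝ) (n : ℕ) (f : ℝ[X]) (c : Fin (n + 1) → ℝ)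
    (hc : locMat γ (n + 1) f *ᵥ c = fun i : Fin (n + 1) => riesz γ (f * X ^ (n + 1 + (i : ℕ)))) :
    locMat γ (n + 1) (X * f) = locMat γ (n + 1) f * companion c := by
  ext i j
  induction j using Fin.lastCases with
  | last =>
    rw [mul_companion_last, hc]
    simp only [locMat, Fin.val_last]
    congr 1
    ring
  | cast j =>
    rw [mul_companion_castSucc]
    simp only [locMat, Fin.val_succ, Fin.val_castSucc]
    congr 1
    ring

theorem stmt_16 (d2 : ℕ) (hd2 : 1 ≤ d2) (γ : ℕ → ℝ) (y : ℝ)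
    (f : Polynomial ℝ)
    (hinv : IsUnit (locMat γ d2 f).det)
    (lam : Fin d2 → ℝ)
    (hlam : (locMat γ d2 f).mulVec lam =
      fun i : Fin d2 => riesz γ (f * X ^ (d2 + (i : ℕ))))
    (Cg : Matrix (Fin d2) (Fin d2) ℝ)
    (hCg : ∀ i j : Fin d2, Cg i j =
      if (j : ℕ) = d2 - 1 then lam i else if (i : ℕ) = (j : ℕ) + 1 then 1 else 0) :
    locMat γ d2 ((X - C y) * f) = locMat γ d2 f * (Cg - y • (1 : Matrix (Fin d2) (Fin d2) ℝ)) ∧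
    ((locMat γ d2 ((X - C y) * f)).det = 0 ↔
      y ^ d2 - ∑ i : Fin d2, lam i * y ^ (i : ℕ) = 0) := by
  obtain ⟨n, rfl⟩ : ∃ n, d2 = n + 1 := ⟨d2 - 1, by omega⟩
  obtain rfl : Cg = companion lam := Matrix.ext hCg
  have hshift : locMat γ (n + 1) ((X - C y) * f) = locMat γ (n + 1) f * (companion lam - y • 1) := by
    rw [locMat_X_sub_C_mul, locMat_X_mul_eq_mul_companion γ n f lam hlam, Matrix.mul_sub,
      Matrix.mul_smul, Matrix.mul_one]
  refine ⟨hshift, ?_⟩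
  rw [hshift, Matrix.det_mul, hinv.mul_right_eq_zero, det_companion_sub_smul_eq_zero_iff]
end
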